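/- arXiv:1608.00733 — 4 statements merged into one kernel-verified Lean document; each statement's English description precedes it below -/
import Mathlib

section
/- Let α ∈ (0,1), β > 0 and γ > 0, and define ψ_γ(x) = x^{-(1+γ)} exp{-(β/(1+αγ)) x^{-(1+αγ)/α}} for x > 0. Then the function x ↦ α x^{1+γ} ψ_γ(x) is twice differentiable on (0,∞) and satisfies the stationary Fokker–Planck equation d²/dx²[α x^{1+γ} ψ_γ(x)] = d/dx[β x^{-1/α} ψ_γ(x)] for all x > 0. -/
open Real Filter Topology

/-! Since `x^{1+γ} ψ_γ(x) = exp(c x^q)` with `c = -β/(1+αγ)` and `q = -(1+αγ)/α`, the function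
`h = α x^{1+γ} ψ_γ` is `α exp(c x^q)`, whose derivative `α c q x^{q-1} exp(c x^q)` is exactly the
drift term `β x^{-1/α} ψ_γ(x)` because `α c q = β`. So `h' = g` on `(0,∞)`, and differentiating
once more gives the equation. -/

theorem differentiableAt_deriv_and_deriv_deriv_eq {f g : ℝ → ℝ} {x : ℝ}
    (hf : ∀ᶠ y in 𝓝 x, HasDerivAt f (g y) y) (hg : DifferentiableAt ℝ g x) :
    DifferentiableAt ℝ f x ∧ DifferentiableAt ℝ (deriv f) x ∧
      deriv (deriv f) x = deriv g x := by
  have hderiv : deriv f =ᶠ[𝓝 x] g := hf.mono fun _ hy => hy.deriv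
  exact ⟨hf.self_of_nhds.differentiableAt, hderiv.differentiableAt_iff.mpr hg,
    hderiv.deriv_eq⟩

theorem hasDerivAt_exp_mul_rpow (c q : ℝ) {x : ℝ} (hx : x ≠ 0) :
    HasDerivAt (fun y => exp (c * y ^ q)) (exp (c * x ^ q) * (c * (q * x ^ (q - 1)))) x :=
  ((hasDerivAt_rpow_const (Or.inl hx)).const_mul c).exp

theorem rpow_mul_rpow_neg_mul {x : ℝ} (hx : 0 < x) (a b : ℝ) :
    x ^ a * (x ^ (-a) * b) = b := by
  rw [← mul_assoc, ← rpow_add hx, add_neg_cancel, rpow_zero, one_mul]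

theorem hasDerivAt_stationary_flux {α β γ x : ℝ} (hα : α ≠ 0) (hαγ : 1 + α * γ ≠ 0)
    (hx : 0 < x) :
    HasDerivAt (fun y => α * exp (-(β / (1 + α * γ)) * y ^ (-(1 + α * γ) / α)))
      (β * x ^ (-(1 / α)) *
        (x ^ (-(1 + γ)) * exp (-(β / (1 + α * γ)) * x ^ (-(1 + α * γ) / α)))) x := by
  set c := -(β / (1 + α * γ))
  set q := -(1 + α * γ) / α
  refine ((hasDerivAt_exp_mul_rpow c q hx.ne').const_mul α).congr_deriv ?_
  have hexp : -(1 / α) + -(1 + γ) = q - 1 := by simp only [q]; field_simp; ring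
  have hcoef : α * c * q = β := by simp only [c, q]; field_simp
  calc α * (exp (c * x ^ q) * (c * (q * x ^ (q - 1))))
      = α * c * q * x ^ (q - 1) * exp (c * x ^ q) := by ring
    _ = β * (x ^ (-(1 / α)) * x ^ (-(1 + γ))) * exp (c * x ^ q) := by
      rw [hcoef, ← rpow_add hx, hexp]
    _ = _ := by ring

theorem stmt_7_general (α β γ : ℝ) (hα : α ∈ Set.Ioo (0:ℝ) 1) (hγ : 0 < γ)
    (ψ h g : ℝ → ℝ)
    (hψ : ∀ x : ℝ, ψ x =
      x ^ (-(1 + γ)) * Real.exp (-(β / (1 + α * γ)) * x ^ (-(1 + α * γ) / α)))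
    (hh : ∀ x : ℝ, h x = α * x ^ (1 + γ) * ψ x)
    (hg : ∀ x : ℝ, g x = β * x ^ (-(1/α)) * ψ x) :
    ∀ x : ℝ, 0 < x →
      DifferentiableAt ℝ h x ∧ DifferentiableAt ℝ (deriv h) x ∧
        deriv (deriv h) x = deriv g x := by
  intro x hx
  have hαγ : 1 + α * γ ≠ 0 := by nlinarith [hα.1]
  have hh_eq : ∀ y, 0 < y → h y = α * exp (-(β / (1 + α * γ)) * y ^ (-(1 + α * γ) / α)) :=
    fun y hy => by rw [hh, hψ, mul_assoc, rpow_mul_rpow_neg_mul hy]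
  have hflux : ∀ᶠ y in 𝓝 x, HasDerivAt h (g y) y := by
    filter_upwards [eventually_gt_nhds hx] with y hy
    rw [hg, hψ]
    refine (hasDerivAt_stationary_flux hα.1.ne' hαγ hy).congr_of_eventuallyEq ?_
    filter_upwards [eventually_gt_nhds hy] with z hz using hh_eq z hz
  refine differentiableAt_deriv_and_deriv_deriv_eq hflux ?_
  rw [funext hg, funext hψ]
  fun_prop (disch := exact hx.ne')

/-- The unnormalised stationary density
`ψ_γ(x) = x^{-(1+γ)} exp{-(β/(1+αγ)) x^{-(1+αγ)/α}}` solves the stationary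
Fokker–Planck equation `(α x^{1+γ} ψ_γ)'' = (β x^{-1/α} ψ_γ)'` on `(0,∞)`. -/
theorem stmt_7 (α β γ : ℝ) (hα : α ∈ Set.Ioo (0:ℝ) 1) (hβ : 0 < β) (hγ : 0 < γ)
    (ψ h g : ℝ → ℝ)
    (hψ : ∀ x : ℝ, ψ x =
      x ^ (-(1 + γ)) * Real.exp (-(β / (1 + α * γ)) * x ^ (-(1 + α * γ) / α)))
    (hh : ∀ x : ℝ, h x = α * x ^ (1 + γ) * ψ x)
    (hg : ∀ x : ℝ, g x = β * x ^ (-(1/α)) * ψ x) :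
    ∀ x : ℝ, 0 < x →
      DifferentiableAt ℝ h x ∧ DifferentiableAt ℝ (deriv h) x ∧
        deriv (deriv h) x = deriv g x :=
  stmt_7_general α β γ hα hγ ψ h g hψ hh hg
end

section
/- Let α ∈ (0,1), β > 0 and γ > 0. The scale density z_γ(x) = exp{(β/(1+αγ)) x^{-(1+αγ)/α}} satisfies ∫₀¹ z_γ(x) dx = +∞ and ∫₁^∞ z_γ(x) dx = +∞, while the speed density m_γ(x) = (1/(2α x^{1+γ})) exp{-(β/(1+αγ)) x^{-(1+αγ)/α}} satisfies ∫₀^∞ m_γ(x) dx < ∞. -/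
open Real MeasureTheory Set

/-!
Write `c = β / (1 + αγ) > 0` and `q = -(1 + αγ) / α`; since `α < 1`, `q < -1`.
Near `0`, `exp (c x^q) ≥ c x^q` and `x^q` is not integrable there; near `∞`, `exp (c x^q) ≥ 1`.
For the speed density, `exp (-c x^q) ≤ n! / (c x^q)^n` kills the singularity `x^{-(1+γ)}` at `0`
once `n` is large, while at `∞` the density is dominated by the integrable `x^{-(1+γ)}`.
-/

lemma lintegral_exp_mul_rpow_Ioo_zero_one_eq_top {c q : ℝ} (hc : 0 < c) (hq : q ≤ -1) :
    ∫⁻ x in Ioo (0 : ℝ) 1, ENNReal.ofReal (exp (c * x ^ q)) = ⊤ := by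
  have h_not_int : ¬ IntegrableOn (fun x : ℝ => c * x ^ q) (Ioo 0 1) := by
    rw [IntegrableOn, integrable_const_mul_iff (isUnit_iff_ne_zero.mpr hc.ne'),
      ← IntegrableOn, intervalIntegral.integrableOn_Ioo_rpow_iff one_pos]
    linarith
  have h_nonneg : 0 ≤ᵐ[volume.restrict (Ioo (0 : ℝ) 1)] fun x => c * x ^ q := by
    filter_upwards [ae_restrict_mem measurableSet_Ioo] with x hx
    have := rpow_pos_of_pos hx.1 q
    positivity
  have h_top : ∫⁻ x in Ioo (0 : ℝ) 1, ENNReal.ofReal (c * x ^ q) = ⊤ := by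
    by_contra h
    exact h_not_int ((lintegral_ofReal_ne_top_iff_integrable (by fun_prop) h_nonneg).mp h)
  refine top_le_iff.mp (h_top ▸ lintegral_mono fun x => ENNReal.ofReal_le_ofReal ?_)
  linarith [add_one_le_exp (c * x ^ q)]

lemma lintegral_exp_Ioi_eq_top_of_nonneg {f : ℝ → ℝ} {a : ℝ} (hf : ∀ x ∈ Ioi a, 0 ≤ f x) :
    ∫⁻ x in Ioi a, ENNReal.ofReal (exp (f x)) = ⊤ := by
  refine top_le_iff.mp ?_
  calc ⊤ = ∫⁻ _ in Ioi a, (1 : ENNReal) := by rw [setLIntegral_one, volume_Ioi]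
    _ ≤ ∫⁻ x in Ioi a, ENNReal.ofReal (exp (f x)) := by
      refine setLIntegral_mono' measurableSet_Ioi fun x hx => ?_
      simpa using one_le_exp (hf x hx)

lemma exp_neg_le_factorial_div_pow {y : ℝ} (hy : 0 < y) (n : ℕ) :
    exp (-y) ≤ n.factorial / y ^ n := by
  rw [exp_neg, ← inv_div]
  exact inv_anti₀ (by positivity) (pow_div_factorial_le_exp _ hy.le n)

lemma rpow_mul_exp_neg_mul_rpow_le {c q p x : ℝ} (hc : 0 < c) (hx : 0 < x) (hx1 : x ≤ 1)
    {n : ℕ} (hn : 0 ≤ p - q * n) :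
    x ^ p * exp (-c * x ^ q) ≤ n.factorial / c ^ n := by
  have hxq : 0 < x ^ q := rpow_pos_of_pos hx q
  calc x ^ p * exp (-c * x ^ q)
      ≤ x ^ p * (n.factorial / (c * x ^ q) ^ n) := by
        rw [neg_mul]
        gcongr
        exact exp_neg_le_factorial_div_pow (by positivity) n
    _ = n.factorial / c ^ n * x ^ (p - q * n) := by
        rw [mul_pow, ← rpow_natCast (x ^ q), ← rpow_mul hx.le, rpow_sub hx]
        field_simp
    _ ≤ n.factorial / c ^ n := mul_le_of_le_one_right (by positivity) (rpow_le_one hx.le hx1 hn)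

lemma integrableOn_rpow_mul_exp_neg_mul_rpow_Ioc {c q : ℝ} (hc : 0 < c) (hq : q < 0) (p : ℝ) :
    IntegrableOn (fun x : ℝ => x ^ p * exp (-c * x ^ q)) (Ioc 0 1) := by
  set n := ⌈p / q⌉₊
  have hn : 0 ≤ p - q * n := by
    have := (div_le_iff_of_neg hq).mp (Nat.le_ceil (p / q))
    linarith
  refine Measure.integrableOn_of_bounded (M := n.factorial / c ^ n) (by simp [volume_Ioc])
    (by fun_prop) ?_
  filter_upwards [ae_restrict_mem measurableSet_Ioc] with x ⟨hx0, hx1⟩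
  rw [norm_of_nonneg (by positivity)]
  exact rpow_mul_exp_neg_mul_rpow_le hc hx0 hx1 hn

lemma integrableOn_rpow_mul_exp_neg_mul_rpow_Ioi_one {c p : ℝ} (hc : 0 ≤ c) (hp : p < -1)
    (q : ℝ) : IntegrableOn (fun x : ℝ => x ^ p * exp (-c * x ^ q)) (Ioi 1) := by
  refine (integrableOn_Ioi_rpow_of_lt hp one_pos).mono' (by fun_prop) ?_
  filter_upwards [ae_restrict_mem measurableSet_Ioi] with x hx
  have hx0 : 0 < x := zero_lt_one.trans hx
  have hxq : 0 < x ^ q := rpow_pos_of_pos hx0 q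
  rw [norm_of_nonneg (by positivity)]
  refine mul_le_of_le_one_right (by positivity) (exp_le_one_iff.mpr ?_)
  nlinarith

lemma integrableOn_rpow_mul_exp_neg_mul_rpow_Ioi_zero {c q p : ℝ} (hc : 0 < c) (hq : q < 0)
    (hp : p < -1) : IntegrableOn (fun x : ℝ => x ^ p * exp (-c * x ^ q)) (Ioi 0) := by
  rw [← Ioc_union_Ioi_eq_Ioi zero_le_one]
  exact (integrableOn_rpow_mul_exp_neg_mul_rpow_Ioc hc hq p).union
    (integrableOn_rpow_mul_exp_neg_mul_rpow_Ioi_one hc.le hp q)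

/-- Boundary/integrability properties of the scale density
`z_γ(x) = exp{(β/(1+αγ)) x^{-(1+αγ)/α}}` and speed density
`m_γ(x) = (1/(2α x^{1+γ})) exp{-(β/(1+αγ)) x^{-(1+αγ)/α}}`. -/
theorem stmt_8 (α β γ : ℝ) (hα : α ∈ Set.Ioo (0:ℝ) 1) (hβ : 0 < β) (hγ : 0 < γ) :
    (∫⁻ x in Set.Ioo (0:ℝ) 1,
      ENNReal.ofReal (Real.exp ((β / (1 + α * γ)) * x ^ (-(1 + α * γ) / α))) = ⊤) ∧
    (∫⁻ x in Set.Ioi (1:ℝ),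
      ENNReal.ofReal (Real.exp ((β / (1 + α * γ)) * x ^ (-(1 + α * γ) / α))) = ⊤) ∧
    MeasureTheory.IntegrableOn
      (fun x : ℝ => (1 / (2 * α * x ^ (1 + γ))) *
        Real.exp (-(β / (1 + α * γ)) * x ^ (-(1 + α * γ) / α)))
      (Set.Ioi 0) := by
  obtain ⟨hα0, hα1⟩ := hα
  have hc : 0 < β / (1 + α * γ) := by positivity
  have hq : -(1 + α * γ) / α < -1 := by
    rw [div_lt_iff₀ hα0]
    nlinarith
  refine ⟨lintegral_exp_mul_rpow_Ioo_zero_one_eq_top hc hq.le,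
    lintegral_exp_Ioi_eq_top_of_nonneg fun x hx => ?_, ?_⟩
  · have := rpow_pos_of_pos (zero_lt_one.trans hx) (-(1 + α * γ) / α)
    positivity
  · have h := integrableOn_rpow_mul_exp_neg_mul_rpow_Ioi_zero hc
      (by linarith : -(1 + α * γ) / α < 0) (by linarith : -(1 + γ) < -1)
    refine IntegrableOn.congr_fun (h.const_mul (2 * α)⁻¹) (fun x hx => ?_) measurableSet_Ioi
    simp only [rpow_neg (le_of_lt hx)]
    field_simp
end

section
/- Let α ∈ (0,1), β > 0, and let f : (0,∞) → ℝ be three times continuously differentiable with bounded third derivative on a neighbourhood of s > 0. Let (k_n) be a sequence of positive integers with k_n/n^α → s. Define p⁺_n = (1 − α k_n/n)(α k_n/n + β k_n^{-1/α}) and p⁻_n = (α k_n/n)(n − α k_n)(1/n)(1 − β k_n^{-1/α}). Then n^{1+α} [ (f((k_n+1)/n^α) − f(k_n/n^α)) p⁺_n + (f((k_n−1)/n^α) − f(k_n/n^α)) p⁻_n ] → (β/s^{1/α}) f'(s) + α s f''(s) as n → ∞. -/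
/-!
Write `X = k/n^α`, `h = n^{-α}`. Expanding `f(X ± h)` to second order, the bracket becomes
`f'(X) h (p⁺ - p⁻) + f''(X) h² (p⁺ + p⁻) / 2` plus a remainder of size `O(h³ (p⁺ + p⁻))`.
With `A = αk/n → 0` and `B = β k^{-1/α}`, one has `n^{1+α} h (p⁺ - p⁻) = (1 - A²) n B` and
`n B = β X^{-1/α} → β s^{-1/α}`, while `n^{1+α} h² (p⁺ + p⁻) → 2αs`; the remainder contributes
`O(h) → 0` after rescaling.
-/

open Real Filter Topology Metric

theorem abs_le_mul_of_hasDerivAt_closedBall {g g' : ℝ → ℝ} {x r C : ℝ}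
    (hg : ∀ y ∈ closedBall x r, HasDerivAt g (g' y) y)
    (hC : ∀ y ∈ closedBall x r, |g' y| ≤ C) (hgx : g x = 0) :
    ∀ y ∈ closedBall x r, |g y| ≤ C * r := by
  intro y hy
  have hx : x ∈ closedBall x r := mem_closedBall_self (dist_nonneg.trans hy)
  have hC0 : 0 ≤ C := (abs_nonneg _).trans (hC x hx)
  have hmvt := (convex_closedBall x r).norm_image_sub_le_of_norm_hasDerivWithin_le
    (fun z hz => (hg z hz).hasDerivWithinAt) hC hx hy
  rw [hgx, sub_zero, ← dist_eq_norm] at hmvt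
  exact hmvt.trans (mul_le_mul_of_nonneg_left hy hC0)

theorem abs_taylor_two_remainder_le {f : ℝ → ℝ} {U : Set ℝ} {M : ℝ} (hU : IsOpen U)
    (hf : ContDiffOn ℝ 3 f U) (hM : ∀ y ∈ U, |iteratedDeriv 3 f y| ≤ M)
    {x h : ℝ} (hxh : closedBall x |h| ⊆ U) :
    |f (x + h) - f x - deriv f x * h - deriv (deriv f) x * h ^ 2 / 2| ≤ M * |h| ^ 3 := by
  set D := closedBall x |h|
  have hf1 : ContDiffOn ℝ 2 (deriv f) U := hf.deriv_of_isOpen hU (by norm_num)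
  have hf2 : ContDiffOn ℝ 1 (deriv (deriv f)) U := hf1.deriv_of_isOpen hU (by norm_num)
  have hasDerivAt_of {g : ℝ → ℝ} {m : WithTop ℕ∞} (hg : ContDiffOn ℝ m g U) (hm : m ≠ 0) :
      ∀ y ∈ D, HasDerivAt g (deriv g y) y := fun y hy =>
    ((hg.differentiableOn hm).differentiableAt (hU.mem_nhds (hxh hy))).hasDerivAt
  have hd3 : ∀ y ∈ D, HasDerivAt (deriv (deriv f)) (iteratedDeriv 3 f y) y := by
    simpa only [iteratedDeriv_succ, iteratedDeriv_zero] using hasDerivAt_of hf2 one_ne_zero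
  have hM' : ∀ y ∈ D, |iteratedDeriv 3 f y| ≤ M := fun y hy => hM y (hxh hy)
  -- integrate the bound on `f'''` three times, starting from `x`
  have h2 := abs_le_mul_of_hasDerivAt_closedBall
    (g := fun y => deriv (deriv f) y - deriv (deriv f) x)
    (fun y hy => (hd3 y hy).sub_const _) hM' (sub_self _)
  have h1 := abs_le_mul_of_hasDerivAt_closedBall
    (g := fun y => deriv f y - deriv f x - deriv (deriv f) x * (y - x))
    (fun y hy => ((hasDerivAt_of hf1 two_ne_zero y hy).sub_const (deriv f x)).sub
      (((hasDerivAt_id' y).sub_const x).const_mul (deriv (deriv f) x)) |>.congr_deriv (by ring))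
    h2 (by simp)
  have h0 := abs_le_mul_of_hasDerivAt_closedBall
    (g := fun y => f y - f x - deriv f x * (y - x) - deriv (deriv f) x * (y - x) ^ 2 / 2)
    (fun y hy => (((hasDerivAt_of hf three_ne_zero y hy).sub_const (f x)).sub
      (((hasDerivAt_id' y).sub_const x).const_mul (deriv f x))).sub
      (((((hasDerivAt_id' y).sub_const x).pow 2).const_mul (deriv (deriv f) x)).div_const 2)
      |>.congr_deriv (by simp only [mul_one, Nat.cast_ofNat, Nat.add_one_sub_one, pow_one]; ring))
    h1 (by simp) (x + h) (by simp)
  simp only [add_sub_cancel_left] at h0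
  calc _ ≤ M * |h| * |h| * |h| := h0
    _ = M * |h| ^ 3 := by ring

theorem tendsto_birthDeath_generator {f : ℝ → ℝ} {U : Set ℝ} {s M a b : ℝ} (hU : U ∈ 𝓝 s)
    (hf : ContDiffOn ℝ 3 f U) (hM : ∀ y ∈ U, |iteratedDeriv 3 f y| ≤ M)
    {X h P Q c : ℕ → ℝ} (hX : Tendsto X atTop (𝓝 s)) (hh : Tendsto h atTop (𝓝 0))
    (hP : ∀ᶠ n in atTop, 0 ≤ P n) (hQ : ∀ᶠ n in atTop, 0 ≤ Q n)
    (ha : Tendsto (fun n => c n * h n * (P n - Q n)) atTop (𝓝 a))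
    (hb : Tendsto (fun n => c n * h n ^ 2 * (P n + Q n)) atTop (𝓝 b)) :
    Tendsto (fun n => c n * ((f (X n + h n) - f (X n)) * P n + (f (X n - h n) - f (X n)) * Q n))
      atTop (𝓝 (deriv f s * a + deriv (deriv f) s / 2 * b)) := by
  set V := interior U
  have hV : IsOpen V := isOpen_interior
  have hfV : ContDiffOn ℝ 3 f V := hf.mono interior_subset
  have hMV : ∀ y ∈ V, |iteratedDeriv 3 f y| ≤ M := fun y hy => hM y (interior_subset hy)
  have hf1 : ContDiffOn ℝ 2 (deriv f) V := hfV.deriv_of_isOpen hV (by norm_num)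
  have hf2 : ContDiffOn ℝ 1 (deriv (deriv f)) V := hf1.deriv_of_isOpen hV (by norm_num)
  have hVs : V ∈ 𝓝 s := interior_mem_nhds.2 hU
  have hd1 := (hf1.continuousOn.continuousAt hVs).tendsto.comp hX
  have hd2 := (hf2.continuousOn.continuousAt hVs).tendsto.comp hX
  set Rp := fun n =>
    f (X n + h n) - f (X n) - deriv f (X n) * h n - deriv (deriv f) (X n) * h n ^ 2 / 2
  set Rm := fun n =>
    f (X n + -h n) - f (X n) - deriv f (X n) * -h n - deriv (deriv f) (X n) * (-h n) ^ 2 / 2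
  have hball : ∀ᶠ n in atTop, closedBall (X n) |h n| ⊆ V := by
    have hr : Tendsto (fun n => |h n| + dist (X n) s) atTop (𝓝 0) := by
      simpa using hh.abs.add (tendsto_iff_dist_tendsto_zero.1 hX)
    filter_upwards [hr.eventually (eventually_closedBall_subset hVs)] with n hn
    exact (closedBall_subset_closedBall' le_rfl).trans hn
  have hR : Tendsto (fun n => c n * (Rp n * P n + Rm n * Q n)) atTop (𝓝 0) := by
    have hbound : ∀ᶠ n in atTop,
        |c n * (Rp n * P n + Rm n * Q n)| ≤ M * |h n| * |c n * h n ^ 2 * (P n + Q n)| := by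
      filter_upwards [hball, hP, hQ] with n hn hPn hQn
      have hp := abs_taylor_two_remainder_le hV hfV hMV hn
      have hm := abs_taylor_two_remainder_le hV hfV hMV (h := -h n) (by rwa [abs_neg])
      rw [abs_neg] at hm
      calc |c n * (Rp n * P n + Rm n * Q n)| ≤ |c n| * (|Rp n| * P n + |Rm n| * Q n) := by
            rw [abs_mul]
            gcongr
            calc _ ≤ |Rp n * P n| + |Rm n * Q n| := abs_add_le _ _
              _ = _ := by rw [abs_mul, abs_mul, abs_of_nonneg hPn, abs_of_nonneg hQn]
        _ ≤ |c n| * (M * |h n| ^ 3 * P n + M * |h n| ^ 3 * Q n) := by gcongr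
        _ = M * |h n| * |c n * h n ^ 2 * (P n + Q n)| := by
            rw [abs_mul, abs_mul, abs_of_nonneg (add_nonneg hPn hQn), abs_pow]
            ring
    refine squeeze_zero_norm' hbound ?_
    simpa using ((hh.abs.const_mul M).mul hb.abs)
  convert ((hd1.mul ha).add ((hd2.div_const 2).mul hb)).add hR using 2 with n
  · simp only [Function.comp_apply, Rp, Rm, ← sub_eq_add_neg]
    ring
  · rw [add_zero]

noncomputable def upProb (α β : ℝ) (k : ℕ → ℕ) (n : ℕ) : ℝ :=
  (1 - α * (k n : ℝ) / n) * (α * (k n : ℝ) / n + β * (k n : ℝ) ^ (-(1/α)))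

noncomputable def downProb (α β : ℝ) (k : ℕ → ℕ) (n : ℕ) : ℝ :=
  (α * (k n : ℝ) / n) * ((n : ℝ) - α * (k n : ℝ)) * (1 / n) * (1 - β * (k n : ℝ) ^ (-(1/α)))

theorem div_rpow_rpow_neg_inv {α x y : ℝ} (hα : α ≠ 0) (hx : 0 ≤ x) (hy : 0 ≤ y) :
    (x / y ^ α) ^ (-(1/α)) = y * x ^ (-(1/α)) := by
  rw [div_rpow hx (rpow_nonneg hy α), ← rpow_mul hy, show α * (-(1/α)) = -1 by field_simp,
    rpow_neg_one, div_inv_eq_mul, mul_comm]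

theorem tendsto_inv_natCast_rpow {α : ℝ} (hα : 0 < α) :
    Tendsto (fun n : ℕ => ((n : ℝ) ^ α)⁻¹) atTop (𝓝 0) :=
  ((tendsto_rpow_atTop hα).comp tendsto_natCast_atTop_atTop).inv_tendsto_atTop

section ClusterChain

variable {α β s : ℝ} {k : ℕ → ℕ}

theorem tendsto_div_natCast_of_tendsto_div_rpow {x : ℕ → ℝ} (hα : α < 1)
    (hx : Tendsto (fun n : ℕ => x n / (n : ℝ) ^ α) atTop (𝓝 s)) :
    Tendsto (fun n : ℕ => x n / n) atTop (𝓝 0) := by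
  have hpow : Tendsto (fun n : ℕ => (n : ℝ) ^ (α - 1)) atTop (𝓝 0) := by
    simpa [neg_sub, Function.comp_def] using
      (tendsto_rpow_neg_atTop (sub_pos.2 hα)).comp tendsto_natCast_atTop_atTop
  have hlim := hx.mul hpow
  rw [mul_zero] at hlim
  refine hlim.congr' ?_
  filter_upwards [eventually_gt_atTop 0] with n hn
  have hn0 : (0 : ℝ) < n := Nat.cast_pos.2 hn
  rw [rpow_sub hn0, rpow_one]
  field_simp

theorem tendsto_natCast_mul_rpow_neg_inv (hα : α ≠ 0) (hs : 0 < s)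
    (hks : Tendsto (fun n : ℕ => (k n : ℝ) / (n : ℝ) ^ α) atTop (𝓝 s)) :
    Tendsto (fun n : ℕ => (n : ℝ) * (k n : ℝ) ^ (-(1/α))) atTop (𝓝 (s ^ (-(1/α)))) := by
  refine ((continuousAt_rpow_const s _ (Or.inl hs.ne')).tendsto.comp hks).congr fun n => ?_
  exact div_rpow_rpow_neg_inv hα (Nat.cast_nonneg _) (Nat.cast_nonneg _)

theorem downProb_eq {n : ℕ} (hn : n ≠ 0) :
    downProb α β k n =
      α * (k n : ℝ) / n * (1 - α * (k n : ℝ) / n) * (1 - β * (k n : ℝ) ^ (-(1/α))) := by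
  have hn0 : (n : ℝ) ≠ 0 := Nat.cast_ne_zero.2 hn
  unfold downProb
  field_simp

theorem tendsto_mul_div_natCast (hα : α < 1)
    (hks : Tendsto (fun n : ℕ => (k n : ℝ) / (n : ℝ) ^ α) atTop (𝓝 s)) :
    Tendsto (fun n : ℕ => α * (k n : ℝ) / n) atTop (𝓝 0) := by
  simpa only [mul_div_assoc, mul_zero] using
    (tendsto_div_natCast_of_tendsto_div_rpow hα hks).const_mul α

theorem tendsto_upProb_sub_downProb (hα₀ : α ≠ 0) (hα₁ : α < 1) (hs : 0 < s)
    (hks : Tendsto (fun n : ℕ => (k n : ℝ) / (n : ℝ) ^ α) atTop (𝓝 s)) :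
    Tendsto (fun n : ℕ => (n : ℝ) ^ (1 + α) * ((n : ℝ) ^ α)⁻¹ *
      (upProb α β k n - downProb α β k n)) atTop (𝓝 (β * s ^ (-(1/α)))) := by
  have hlim := ((tendsto_const_nhds (x := (1 : ℝ))).sub
    ((tendsto_mul_div_natCast hα₁ hks).pow 2)).mul
    ((tendsto_natCast_mul_rpow_neg_inv hα₀ hs hks).const_mul β)
  rw [zero_pow two_ne_zero, sub_zero, one_mul] at hlim
  refine hlim.congr' ?_
  filter_upwards [eventually_ne_atTop 0] with n hn
  have hn0 : (0 : ℝ) < n := Nat.cast_pos.2 (Nat.pos_of_ne_zero hn)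
  have hnα : (0 : ℝ) < (n : ℝ) ^ α := rpow_pos_of_pos hn0 α
  rw [downProb_eq hn, upProb, rpow_add hn0, rpow_one]
  field_simp
  ring

theorem tendsto_upProb_add_downProb (hα₀ : 0 < α) (hα₁ : α < 1) (hs : 0 < s)
    (hks : Tendsto (fun n : ℕ => (k n : ℝ) / (n : ℝ) ^ α) atTop (𝓝 s)) :
    Tendsto (fun n : ℕ => (n : ℝ) ^ (1 + α) * ((n : ℝ) ^ α)⁻¹ ^ 2 *
      (upProb α β k n + downProb α β k n)) atTop (𝓝 (2 * (α * s))) := by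
  have hA := tendsto_mul_div_natCast hα₁ hks
  have hnB := (tendsto_natCast_mul_rpow_neg_inv hα₀.ne' hs hks).const_mul β
  -- `n^{1+α} h² (p⁺ + p⁻) = (1 - A) (2α k/n^α + n B · h (1 - A))`
  have hlim := ((tendsto_const_nhds (x := (1 : ℝ))).sub hA).mul
    ((hks.const_mul α).const_mul 2 |>.add
      ((hnB.mul (tendsto_inv_natCast_rpow hα₀)).mul ((tendsto_const_nhds (x := (1 : ℝ))).sub hA)))
  rw [sub_zero, one_mul, mul_zero, zero_mul, add_zero] at hlim
  refine hlim.congr' ?_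
  filter_upwards [eventually_ne_atTop 0] with n hn
  have hn0 : (0 : ℝ) < n := Nat.cast_pos.2 (Nat.pos_of_ne_zero hn)
  have hnα : (0 : ℝ) < (n : ℝ) ^ α := rpow_pos_of_pos hn0 α
  rw [downProb_eq hn, upProb, rpow_add hn0, rpow_one]
  field_simp
  ring

theorem eventually_upProb_nonneg_and_downProb_nonneg (hα₀ : 0 < α) (hα₁ : α < 1)
    (hβ : 0 ≤ β) (hs : 0 < s)
    (hks : Tendsto (fun n : ℕ => (k n : ℝ) / (n : ℝ) ^ α) atTop (𝓝 s)) :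
    ∀ᶠ n in atTop, 0 ≤ upProb α β k n ∧ 0 ≤ downProb α β k n := by
  have hB : Tendsto (fun n : ℕ => β * (k n : ℝ) ^ (-(1/α))) atTop (𝓝 0) := by
    have hlim := ((tendsto_natCast_mul_rpow_neg_inv hα₀.ne' hs hks).const_mul β).mul
      tendsto_inv_atTop_nhds_zero_nat
    rw [mul_zero] at hlim
    refine hlim.congr' ?_
    filter_upwards [eventually_ne_atTop 0] with n hn
    have hn0 : (n : ℝ) ≠ 0 := Nat.cast_ne_zero.2 hn
    field_simp
  filter_upwards [(tendsto_mul_div_natCast hα₁ hks).eventually (gt_mem_nhds one_pos),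
    hB.eventually (gt_mem_nhds one_pos), eventually_ne_atTop 0] with n hA hB hn
  have hA₀ : 0 ≤ α * (k n : ℝ) / n := by positivity
  have hB₀ : 0 ≤ β * (k n : ℝ) ^ (-(1/α)) := by positivity
  rw [upProb, downProb_eq hn]
  exact ⟨mul_nonneg (by linarith) (by linarith),
    mul_nonneg (mul_nonneg hA₀ (by linarith)) (by linarith)⟩

end ClusterChain

theorem stmt_11_general (α β s : ℝ) (hα : α ∈ Set.Ioo (0:ℝ) 1) (hβ : 0 < β) (hs : 0 < s)
    (f : ℝ → ℝ)
    (hf : ∃ U ∈ nhds s, ContDiffOn ℝ 3 f U ∧ ∃ M : ℝ, ∀ x ∈ U, |iteratedDeriv 3 f x| ≤ M)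
    (k : ℕ → ℕ)
    (hks : Filter.Tendsto (fun n : ℕ => (k n : ℝ) / (n : ℝ) ^ α) atTop (nhds s)) :
    Filter.Tendsto
      (fun n : ℕ =>
        (n : ℝ) ^ (1 + α) *
          ((f (((k n : ℝ) + 1) / (n : ℝ) ^ α) - f ((k n : ℝ) / (n : ℝ) ^ α)) *
              ((1 - α * (k n : ℝ) / n) *
                (α * (k n : ℝ) / n + β * (k n : ℝ) ^ (-(1/α)))) +
            (f (((k n : ℝ) - 1) / (n : ℝ) ^ α) - f ((k n : ℝ) / (n : ℝ) ^ α)) *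
              ((α * (k n : ℝ) / n) * ((n : ℝ) - α * (k n : ℝ)) * (1 / n) *
                (1 - β * (k n : ℝ) ^ (-(1/α))))))
      atTop
      (nhds (β / s ^ ((1:ℝ)/α) * deriv f s + α * s * deriv (deriv f) s)) := by
  obtain ⟨hα₀, hα₁⟩ := hα
  obtain ⟨U, hU, hfU, M, hM⟩ := hf
  have hprob := eventually_upProb_nonneg_and_downProb_nonneg hα₀ hα₁ hβ.le hs hks
  have hgen := tendsto_birthDeath_generator hU hfU hM hks (tendsto_inv_natCast_rpow hα₀)
    (hprob.mono fun _ h => h.1) (hprob.mono fun _ h => h.2)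
    (tendsto_upProb_sub_downProb hα₀.ne' hα₁ hs hks) (tendsto_upProb_add_downProb hα₀ hα₁ hs hks)
  convert hgen using 2 with n
  · rw [add_div, sub_div, one_div, upProb, downProb]
  · rw [rpow_neg hs.le]
    ring

/-- Convergence of the rescaled discrete generator of the cluster-counting chain to
`A f(s) = (β/s^{1/α}) f'(s) + α s f''(s)`. -/
theorem stmt_11 (α β s : ℝ) (hα : α ∈ Set.Ioo (0:ℝ) 1) (hβ : 0 < β) (hs : 0 < s)
    (f : ℝ → ℝ)
    (hf : ∃ U ∈ nhds s, ContDiffOn ℝ 3 f U ∧ ∃ M : ℝ, ∀ x ∈ U, |iteratedDeriv 3 f x| ≤ M)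
    (k : ℕ → ℕ) (hk : ∀ n, 0 < k n)
    (hks : Filter.Tendsto (fun n : ℕ => (k n : ℝ) / (n : ℝ) ^ α) atTop (nhds s)) :
    Filter.Tendsto
      (fun n : ℕ =>
        (n : ℝ) ^ (1 + α) *
          ((f (((k n : ℝ) + 1) / (n : ℝ) ^ α) - f ((k n : ℝ) / (n : ℝ) ^ α)) *
              ((1 - α * (k n : ℝ) / n) *
                (α * (k n : ℝ) / n + β * (k n : ℝ) ^ (-(1/α)))) +
            (f (((k n : ℝ) - 1) / (n : ℝ) ^ α) - f ((k n : ℝ) / (n : ℝ) ^ α)) *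
              ((α * (k n : ℝ) / n) * ((n : ℝ) - α * (k n : ℝ)) * (1 / n) *
                (1 - β * (k n : ℝ) ^ (-(1/α))))))
      atTop
      (nhds (β / s ^ ((1:ℝ)/α) * deriv f s + α * s * deriv (deriv f) s)) :=
  stmt_11_general α β s hα hβ hs f hf k hks
end

section
/- Let α ∈ (0,1), β > 0, and define rates λ₁(n,k) = α k^{1+γ}/n^{1+αγ} + β k^{-1/α} (up) and λ₂(n,k) = α k^{1+γ}/n^{1+αγ} (down) for γ > 0. If k_n/n^α → s > 0 and f is C³ with bounded third derivative near s, then n^{1+α} [ (f((k_n+1)/n^α) − f(k_n/n^α)) λ₁(n,k_n) + (f((k_n−1)/n^α) − f(k_n/n^α)) λ₂(n,k_n) ] → (β/s^{1/α}) f'(s) + α s^{1+γ} f''(s) as n → ∞. -/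
open Real Filter Topology

lemma taylor_aux (f g1 g2 g3 : ℝ → ℝ) (M x h : ℝ) (hh : 0 < h)
    (h1 : ∀ y ∈ Metric.ball x (2*h), HasDerivAt f (g1 y) y)
    (h2 : ∀ y ∈ Metric.ball x (2*h), HasDerivAt g1 (g2 y) y)
    (h3 : ∀ y ∈ Metric.ball x (2*h), HasDerivAt g2 (g3 y) y)
    (hb : ∀ y ∈ Metric.ball x (2*h), |g3 y| ≤ M) :
    ∀ y ∈ Metric.ball x (2*h),
      |f y - f x - (y - x) * g1 x - (y - x)^2 / 2 * g2 x| ≤ 4*M*h^2 * |y - x| := by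
  have hconv : Convex ℝ (Metric.ball x (2*h)) := convex_ball x (2*h)
  have hx : x ∈ Metric.ball x (2*h) := Metric.mem_ball_self (by linarith)
  have hM0 : 0 ≤ M := le_trans (abs_nonneg _) (hb x hx)
  have hdist : ∀ y ∈ Metric.ball x (2*h), |y - x| ≤ 2*h := by
    intro y hy
    have := Metric.mem_ball.mp hy
    rw [Real.dist_eq] at this; linarith
  have step1 : ∀ y ∈ Metric.ball x (2*h), |g2 y - g2 x| ≤ M * (2*h) := by
    intro y hy
    have H := hconv.norm_image_sub_le_of_norm_hasDerivWithin_le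
      (fun z hz => (h3 z hz).hasDerivWithinAt) (fun z hz => by
        rw [Real.norm_eq_abs]; exact hb z hz) hx hy
    rw [Real.norm_eq_abs, Real.norm_eq_abs] at H
    calc |g2 y - g2 x| ≤ M * |y - x| := H
    _ ≤ M * (2*h) := by nlinarith [hdist y hy, abs_nonneg (y-x)]
  have step2 : ∀ y ∈ Metric.ball x (2*h),
      |g1 y - g1 x - (y - x) * g2 x| ≤ (M * (2*h)) * (2*h) := by
    intro y hy
    have hder : ∀ z ∈ Metric.ball x (2*h),
        HasDerivWithinAt (fun w => g1 w - g1 x - (w - x) * g2 x) (g2 z - g2 x)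
          (Metric.ball x (2*h)) z := by
      intro z hz
      have hd : HasDerivAt (fun w => g1 w - g1 x - (w - x) * g2 x) (g2 z - 1 * g2 x) z :=
        ((h2 z hz).sub_const _).sub (((hasDerivAt_id z).sub_const x).mul_const _)
      simpa using hd.hasDerivWithinAt
    have H := hconv.norm_image_sub_le_of_norm_hasDerivWithin_le hder
      (fun z hz => by rw [Real.norm_eq_abs]; exact step1 z hz) hx hy
    simp only [sub_self, zero_mul, sub_zero, Real.norm_eq_abs] at H
    calc |g1 y - g1 x - (y - x) * g2 x| ≤ (M * (2*h)) * |y - x| := H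
    _ ≤ (M * (2*h)) * (2*h) := mul_le_mul_of_nonneg_left (hdist y hy) (by positivity)
  intro y hy
  have hder : ∀ z ∈ Metric.ball x (2*h),
      HasDerivWithinAt (fun w => f w - f x - (w - x) * g1 x - (w - x)^2 / 2 * g2 x)
        (g1 z - g1 x - (z - x) * g2 x) (Metric.ball x (2*h)) z := by
    intro z hz
    have hd : HasDerivAt (fun w => f w - f x - (w - x) * g1 x - (w - x)^2 / 2 * g2 x)
        (g1 z - 1 * g1 x - (↑2 * (z - x)^(2-1) * 1) / 2 * g2 x) z := by
      exact (((h1 z hz).sub_const _).sub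
        (((hasDerivAt_id z).sub_const x).mul_const _)).sub
        (((((hasDerivAt_id z).sub_const x).pow 2).div_const 2).mul_const _)
    have : (g1 z - 1 * g1 x - (↑2 * (z - x)^(2-1) * 1) / 2 * g2 x)
        = g1 z - g1 x - (z - x) * g2 x := by norm_num
    rw [this] at hd
    exact hd.hasDerivWithinAt
  have H := hconv.norm_image_sub_le_of_norm_hasDerivWithin_le hder
    (fun z hz => by rw [Real.norm_eq_abs]; exact step2 z hz) hx hy
  simp only [sub_self, zero_mul, sub_zero, ne_eq, OfNat.ofNat_ne_zero,
    not_false_eq_true, zero_pow, zero_div, Real.norm_eq_abs] at H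
  calc |f y - f x - (y - x) * g1 x - (y - x)^2 / 2 * g2 x| ≤ (M * (2*h)) * (2*h) * |y - x| := H
  _ = 4*M*h^2 * |y - x| := by ring

lemma gen_limit (f g1 g2 g3 : ℝ → ℝ) (M s ε : ℝ) (hε : 0 < ε)
    (hd1 : ∀ y ∈ Metric.ball s ε, HasDerivAt f (g1 y) y)
    (hd2 : ∀ y ∈ Metric.ball s ε, HasDerivAt g1 (g2 y) y)
    (hd3 : ∀ y ∈ Metric.ball s ε, HasDerivAt g2 (g3 y) y)
    (hb : ∀ y ∈ Metric.ball s ε, |g3 y| ≤ M)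
    (X H : ℕ → ℝ) (hX : Tendsto X atTop (nhds s)) (hH : Tendsto H atTop (nhds 0))
    (hHpos : ∀ᶠ n in atTop, 0 < H n) :
    Tendsto (fun n => (f (X n + H n) - f (X n)) / H n) atTop (nhds (g1 s)) ∧
    Tendsto (fun n => (f (X n + H n) + f (X n - H n) - 2 * f (X n)) / (H n)^2) atTop
      (nhds (g2 s)) := by
  have hsB : s ∈ Metric.ball s ε := Metric.mem_ball_self hε
  have hM0 : 0 ≤ M := le_trans (abs_nonneg _) (hb s hsB)
  have hc1 : ContinuousAt g1 s := (hd2 s hsB).differentiableAt.continuousAt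
  have hc2 : ContinuousAt g2 s := (hd3 s hsB).differentiableAt.continuousAt
  have evh : ∀ᶠ n in atTop, H n < ε/8 := hH.eventually_lt_const (by linarith)
  have evx : ∀ᶠ n in atTop, |X n - s| < ε/2 := by
    have := Metric.tendsto_nhds.mp hX (ε/2) (by linarith)
    simpa [Real.dist_eq] using this
  have key : ∀ᶠ n in atTop,
      |(f (X n + H n) - f (X n)) / H n - g1 (X n) - H n / 2 * g2 (X n)| ≤ 4*M*(H n)^2 ∧
      |(f (X n + H n) + f (X n - H n) - 2 * f (X n)) / (H n)^2 - g2 (X n)| ≤ 8*M*(H n) := by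
    filter_upwards [hHpos, evh, evx] with n hp hhe hxe
    set x := X n with hxdef
    set h := H n with hhdef
    have hsub : Metric.ball x (2*h) ⊆ Metric.ball s ε := by
      intro y hy
      rw [Metric.mem_ball, Real.dist_eq] at hy ⊢
      have h2 : |y - s| ≤ |y - x| + |x - s| := abs_sub_le y x s
      linarith
    have hT := taylor_aux f g1 g2 g3 M x h hp (fun y hy => hd1 y (hsub hy))
      (fun y hy => hd2 y (hsub hy)) (fun y hy => hd3 y (hsub hy)) (fun y hy => hb y (hsub hy))
    have hmem1 : x + h ∈ Metric.ball x (2*h) := by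
      rw [Metric.mem_ball, Real.dist_eq, show x + h - x = h by ring, abs_of_pos hp]; linarith
    have hmem2 : x - h ∈ Metric.ball x (2*h) := by
      rw [Metric.mem_ball, Real.dist_eq, show x - h - x = -h by ring, abs_neg, abs_of_pos hp]
      linarith
    have hb1 := hT (x+h) hmem1
    have hb2 := hT (x-h) hmem2
    rw [show x + h - x = h by ring, abs_of_pos hp] at hb1
    rw [show x - h - x = -h by ring, abs_neg, abs_of_pos hp] at hb2
    constructor
    · have key1 : (f (x + h) - f x) / h - g1 x - h / 2 * g2 x
          = (f (x+h) - f x - h * g1 x - h^2/2 * g2 x) / h := by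
        field_simp
      rw [key1, abs_div, abs_of_pos hp, div_le_iff₀ hp]
      calc |f (x+h) - f x - h * g1 x - h^2/2 * g2 x| ≤ 4*M*h^2*h := hb1
      _ = 4*M*h^2 * h := by ring
    · have key2 : (f (x+h) + f (x-h) - 2 * f x) / h^2 - g2 x
          = ((f (x+h) - f x - h * g1 x - h^2/2 * g2 x)
            + (f (x-h) - f x - -h * g1 x - (-h)^2/2 * g2 x)) / h^2 := by
        field_simp; ring
      rw [key2, abs_div, abs_of_pos (pow_pos hp 2), div_le_iff₀ (pow_pos hp 2)]
      calc |(f (x+h) - f x - h * g1 x - h^2/2 * g2 x)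
            + (f (x-h) - f x - -h * g1 x - (-h)^2/2 * g2 x)|
          ≤ |f (x+h) - f x - h * g1 x - h^2/2 * g2 x|
            + |f (x-h) - f x - -h * g1 x - (-h)^2/2 * g2 x| := abs_add_le _ _
      _ ≤ 4*M*h^2*h + 4*M*h^2*h := add_le_add hb1 hb2
      _ = 8*M*h * h^2 := by ring
  have hr1 : Tendsto (fun n => (f (X n + H n) - f (X n)) / H n - g1 (X n)
      - H n / 2 * g2 (X n)) atTop (nhds 0) := by
    apply squeeze_zero_norm' (key.mono fun n hn => ?_)
      (show Tendsto (fun n => 4*M*(H n)^2) atTop (nhds 0) by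
        simpa using (hH.pow 2).const_mul (4*M))
    rw [Real.norm_eq_abs]; exact hn.1
  have hr2 : Tendsto (fun n => (f (X n + H n) + f (X n - H n) - 2 * f (X n)) / (H n)^2
      - g2 (X n)) atTop (nhds 0) := by
    apply squeeze_zero_norm' (key.mono fun n hn => ?_)
      (show Tendsto (fun n => 8*M*(H n)) atTop (nhds 0) by
        simpa using hH.const_mul (8*M))
    rw [Real.norm_eq_abs]; exact hn.2
  have hcomp1 : Tendsto (fun n => g1 (X n)) atTop (nhds (g1 s)) := hc1.tendsto.comp hX
  have hcomp2 : Tendsto (fun n => g2 (X n)) atTop (nhds (g2 s)) := hc2.tendsto.comp hX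
  constructor
  · have heq : (fun n => (f (X n + H n) - f (X n)) / H n)
        = fun n => g1 (X n) + H n / 2 * g2 (X n)
          + ((f (X n + H n) - f (X n)) / H n - g1 (X n) - H n / 2 * g2 (X n)) := by
      funext n; ring
    rw [heq]
    have := (hcomp1.add ((hH.div_const 2).mul hcomp2)).add hr1
    simpa using this
  · have heq : (fun n => (f (X n + H n) + f (X n - H n) - 2 * f (X n)) / (H n)^2)
        = fun n => g2 (X n)
          + ((f (X n + H n) + f (X n - H n) - 2 * f (X n)) / (H n)^2 - g2 (X n)) := by
      funext n; ring
    rw [heq]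
    simpa using hcomp2.add hr2

/-- Convergence of the rescaled generator of the continuous-time chain with birth
rate `λ₁(n,k) = α k^{1+γ}/n^{1+αγ} + β k^{-1/α}` and death rate
`λ₂(n,k) = α k^{1+γ}/n^{1+αγ}` to `A_γ f(s) = (β/s^{1/α}) f'(s) + α s^{1+γ} f''(s)`. -/
theorem stmt_12 (α β γ s : ℝ) (hα : α ∈ Set.Ioo (0:ℝ) 1) (hβ : 0 < β) (hγ : 0 < γ)
    (hs : 0 < s) (f : ℝ → ℝ)
    (hf : ∃ U ∈ nhds s, ContDiffOn ℝ 3 f U ∧ ∃ M : ℝ, ∀ x ∈ U, |iteratedDeriv 3 f x| ≤ M)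
    (k : ℕ → ℕ) (hk : ∀ n, 0 < k n)
    (hks : Filter.Tendsto (fun n : ℕ => (k n : ℝ) / (n : ℝ) ^ α) atTop (nhds s)) :
    Filter.Tendsto
      (fun n : ℕ =>
        (n : ℝ) *
          ((f (((k n : ℝ) + 1) / (n : ℝ) ^ α) - f ((k n : ℝ) / (n : ℝ) ^ α)) *
              (α * (k n : ℝ) ^ (1 + γ) / (n : ℝ) ^ (1 + α * γ) +
                β * (k n : ℝ) ^ (-(1/α))) +
            (f (((k n : ℝ) - 1) / (n : ℝ) ^ α) - f ((k n : ℝ) / (n : ℝ) ^ α)) *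
              (α * (k n : ℝ) ^ (1 + γ) / (n : ℝ) ^ (1 + α * γ))) *
          (n : ℝ) ^ α)
      atTop
      (nhds (β / s ^ ((1:ℝ)/α) * deriv f s + α * s ^ (1 + γ) * deriv (deriv f) s)) := by
  obtain ⟨hα0, hα1⟩ := hα
  obtain ⟨U, hU, hCf, M0, hM0⟩ := hf
  obtain ⟨ε, hε, hBU⟩ := Metric.mem_nhds_iff.mp hU
  set M : ℝ := max M0 0 with hMdef
  have hMb : ∀ y ∈ Metric.ball s ε, |deriv (deriv (deriv f)) y| ≤ M := by
    intro y hy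
    have h3 : iteratedDeriv 3 f = deriv (deriv (deriv f)) := by
      rw [show (3:ℕ) = 2 + 1 from rfl, iteratedDeriv_succ,
        show (2:ℕ) = 1 + 1 from rfl, iteratedDeriv_succ, iteratedDeriv_one]
    have := hM0 y (hBU hy)
    rw [h3] at this
    exact this.trans (le_max_left _ _)
  have hCB : ContDiffOn ℝ 3 f (Metric.ball s ε) := hCf.mono hBU
  have hC1 : ContDiffOn ℝ 2 (deriv f) (Metric.ball s ε) :=
    hCB.deriv_of_isOpen Metric.isOpen_ball (by norm_num)
  have hC2 : ContDiffOn ℝ 1 (deriv (deriv f)) (Metric.ball s ε) :=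
    hC1.deriv_of_isOpen Metric.isOpen_ball (by norm_num)
  have hd1 : ∀ y ∈ Metric.ball s ε, HasDerivAt f (deriv f y) y := fun y hy =>
    ((hCB.differentiableOn (by norm_num)).differentiableAt
      (Metric.isOpen_ball.mem_nhds hy)).hasDerivAt
  have hd2 : ∀ y ∈ Metric.ball s ε, HasDerivAt (deriv f) (deriv (deriv f) y) y := fun y hy =>
    ((hC1.differentiableOn (by norm_num)).differentiableAt
      (Metric.isOpen_ball.mem_nhds hy)).hasDerivAt
  have hd3 : ∀ y ∈ Metric.ball s ε,
      HasDerivAt (deriv (deriv f)) (deriv (deriv (deriv f)) y) y := fun y hy =>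
    ((hC2.differentiableOn (by norm_num)).differentiableAt
      (Metric.isOpen_ball.mem_nhds hy)).hasDerivAt
  -- the sequences
  have hu : Tendsto (fun n : ℕ => (n:ℝ)^α) atTop atTop :=
    (tendsto_rpow_atTop hα0).comp tendsto_natCast_atTop_atTop
  have hH0 : Tendsto (fun n : ℕ => ((n:ℝ)^α)⁻¹) atTop (nhds 0) := hu.inv_tendsto_atTop
  have hHpos : ∀ᶠ n : ℕ in atTop, 0 < ((n:ℝ)^α)⁻¹ := by
    filter_upwards [hu.eventually_gt_atTop 0] with n hn
    exact inv_pos.mpr hn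
  obtain ⟨hQ1, hQ2⟩ := gen_limit f (deriv f) (deriv (deriv f)) (deriv (deriv (deriv f)))
    M s ε hε hd1 hd2 hd3 hMb (fun n : ℕ => (k n : ℝ) / (n:ℝ)^α)
    (fun n : ℕ => ((n:ℝ)^α)⁻¹) hks hH0 hHpos
  have hA : Tendsto (fun n : ℕ => ((k n : ℝ) / (n:ℝ)^α) ^ (-(1/α))) atTop
      (nhds (s ^ (-(1/α)))) := hks.rpow_const (Or.inl hs.ne')
  have hB : Tendsto (fun n : ℕ => ((k n : ℝ) / (n:ℝ)^α) ^ (1+γ)) atTop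
      (nhds (s ^ (1+γ))) := hks.rpow_const (Or.inl hs.ne')
  have total : Tendsto (fun n : ℕ =>
      β * ((k n : ℝ) / (n:ℝ)^α) ^ (-(1/α))
        * ((f ((k n : ℝ) / (n:ℝ)^α + ((n:ℝ)^α)⁻¹) - f ((k n : ℝ) / (n:ℝ)^α)) / ((n:ℝ)^α)⁻¹)
      + α * ((k n : ℝ) / (n:ℝ)^α) ^ (1+γ)
        * ((f ((k n : ℝ) / (n:ℝ)^α + ((n:ℝ)^α)⁻¹) + f ((k n : ℝ) / (n:ℝ)^α - ((n:ℝ)^α)⁻¹)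
            - 2 * f ((k n : ℝ) / (n:ℝ)^α)) / (((n:ℝ)^α)⁻¹)^2)) atTop
      (nhds (β * s ^ (-(1/α)) * deriv f s + α * s ^ (1+γ) * deriv (deriv f) s)) :=
    ((tendsto_const_nhds.mul hA).mul hQ1).add ((tendsto_const_nhds.mul hB).mul hQ2)
  have hpt : β / s ^ ((1:ℝ)/α) * deriv f s + α * s ^ (1 + γ) * deriv (deriv f) s
      = β * s ^ (-(1/α)) * deriv f s + α * s ^ (1+γ) * deriv (deriv f) s := by
    rw [Real.rpow_neg hs.le]; ring
  rw [hpt]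
  refine total.congr' ?_
  filter_upwards [eventually_gt_atTop 0] with n hn
  have hN : (0:ℝ) < (n:ℝ) := by exact_mod_cast hn
  have hK : (0:ℝ) < (k n : ℝ) := by exact_mod_cast hk n
  have hupos : (0:ℝ) < (n:ℝ)^α := rpow_pos_of_pos hN α
  have hvpos : (0:ℝ) < (n:ℝ)^(α*γ) := rpow_pos_of_pos hN _
  have e1 : (k n : ℝ) / (n:ℝ)^α + ((n:ℝ)^α)⁻¹ = ((k n : ℝ) + 1) / (n:ℝ)^α := by
    field_simp
  have e2 : (k n : ℝ) / (n:ℝ)^α - ((n:ℝ)^α)⁻¹ = ((k n : ℝ) - 1) / (n:ℝ)^α := by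
    field_simp
  have i5 : (n:ℝ)^(1 + α*γ) = (n:ℝ) * (n:ℝ)^(α*γ) := by
    rw [Real.rpow_add hN, Real.rpow_one]
  have hu1γ : ((n:ℝ)^α)^(1+γ) = (n:ℝ)^α * (n:ℝ)^(α*γ) := by
    rw [← Real.rpow_mul hN.le, show α*(1+γ) = α + α*γ by ring, Real.rpow_add hN]
  have i3 : ((k n : ℝ) / (n:ℝ)^α) ^ (1+γ) = (k n : ℝ)^(1+γ) / ((n:ℝ)^α * (n:ℝ)^(α*γ)) := by
    rw [Real.div_rpow hK.le hupos.le, hu1γ]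
  have hu1α : ((n:ℝ)^α)^(-(1/α)) = (n:ℝ)⁻¹ := by
    rw [← Real.rpow_mul hN.le, show α*(-(1/α)) = -1 by field_simp, Real.rpow_neg_one]
  have i4 : ((k n : ℝ) / (n:ℝ)^α) ^ (-(1/α)) = (k n : ℝ)^(-(1/α)) * (n:ℝ) := by
    rw [Real.div_rpow hK.le hupos.le, hu1α, div_inv_eq_mul]
  rw [e1, e2, i3, i4, i5]
  field_simp
  ring
end
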